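/- Let W_af = W ⋉ Q∨ be an affine Weyl group, ρ∨ the half-sum of positive coroots, and let (y_k)_{k≥0} be a sequence in W_af with y_{k+1} = y_k ∗ t_{−2ρ∨} for all k, where ∗ denotes the Demazure product computed along a fixed reduced expression of t_{−2ρ∨}. Then there exists m₁ ≥ 0 such that for all k ≥ m₁, y_{k+1} = y_k · t_{−2ρ∨} (ordinary product) and ℓ(y_k t_{−2nρ∨}) = ℓ(y_k) + ℓ(t_{−2nρ∨}) for all n > 0. -/

import Mathlib

open scoped Classical

/-- Compatibility: the multiplicative group structure on `AddAut A` that the older Mathlib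
provided (`g * h = h.trans g`, `1 = refl`, `g⁻¹ = g.symm`); current Mathlib makes
`AddAut A` an additive group instead. -/
instance AddAut.groupCompat (A : Type*) [Add A] : Group (AddAut A) where
  mul g h := AddEquiv.trans h g
  one := AddEquiv.refl _
  inv := AddEquiv.symm
  mul_assoc _ _ _ := rfl
  one_mul _ := rfl
  mul_one _ := rfl
  inv_mul_cancel := AddEquiv.self_trans_symm

@[simp]
theorem AddAut.groupCompat_one_apply {A : Type*} [Add A] (a : A) : (1 : AddAut A) a = a :=
  rfl

@[simp]
theorem AddAut.groupCompat_mul_apply {A : Type*} [Add A] (e₁ e₂ : AddAut A) (a : A) :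
    (e₁ * e₂) a = e₁ (e₂ a) :=
  rfl

/-- The data of a finite crystallographic root system (simple roots `α`, simple coroots `αv`,
positive roots `Δpos`, Weyl group `W` acting on the root/weight lattice `P` and on the
coroot lattice `Qv`, highest root `θ`), from which the affine Weyl group
`W_af = W ⋉ Q∨` and its Iwahori–Matsumoto length function are constructed below. -/
structure AffineRootSetup where
  /-- index set of the simple roots -/
  I : Type
  [fintypeI : Fintype I]
  /-- the lattice containing the roots (root/weight lattice) -/
  P : Type
  [acgP : AddCommGroup P]
  /-- the coroot lattice `Q∨` -/
  Qv : Type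
  [acgQv : AddCommGroup Qv]
  /-- the pairing `⟨·,·⟩ : P × Q∨ → ℤ` -/
  pair : P →+ Qv →+ ℤ
  /-- simple roots -/
  α : I → P
  /-- simple coroots -/
  αv : I → Qv
  pair_simple : ∀ i, pair (α i) (αv i) = 2
  /-- the finite Weyl group -/
  W : Type
  [groupW : Group W]
  [fintypeW : Fintype W]
  /-- action of `W` on the root lattice -/
  σP : W →* AddAut P
  /-- action of `W` on the coroot lattice -/
  σQv : W →* AddAut Qv
  pair_invariant : ∀ (w : W) (β : P) (ξ : Qv), pair (σP w β) (σQv w ξ) = pair β ξ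
  /-- simple reflections -/
  s : I → W
  s_act : ∀ (i : I) (β : P), σP (s i) β = β - pair β (αv i) • α i
  s_act_v : ∀ (i : I) (ξ : Qv), σQv (s i) ξ = ξ - pair (α i) ξ • αv i
  sgen : Subgroup.closure (Set.range s) = ⊤
  /-- the set of positive roots -/
  Δpos : Finset P
  simple_mem : ∀ i, α i ∈ Δpos
  pos_decomp : ∀ β ∈ Δpos, β ∈ AddSubmonoid.closure (Set.range α)
  neg_not_pos : ∀ β ∈ Δpos, -β ∉ Δpos
  root_stable : ∀ (w : W), ∀ β ∈ Δpos, σP w β ∈ Δpos ∨ -(σP w β) ∈ Δpos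
  /-- the coroot `β∨` of a root `β` -/
  coroot : P → Qv
  coroot_simple : ∀ i, coroot (α i) = αv i
  coroot_equivariant : ∀ (w : W) (β : P), coroot (σP w β) = σQv w (coroot β)
  coroot_neg : ∀ β : P, coroot (-β) = -coroot β
  /-- the highest root -/
  θ : P
  θ_mem : θ ∈ Δpos
  /-- the reflection in the highest root -/
  sθ : W
  sθ_act : ∀ β : P, σP sθ β = β - pair β (coroot θ) • θ

namespace AffineRootSetup

attribute [instance] fintypeI acgP acgQv groupW fintypeW

variable (R : AffineRootSetup)

/-- `W` acting on `Multiplicative Q∨`. -/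
def phi : R.W →* MulAut (Multiplicative R.Qv) where
  toFun w := AddEquiv.toMultiplicative (R.σQv w)
  map_one' := by ext x; simp
  map_mul' w v := by ext x; simp

/-- The affine Weyl group `W_af = W ⋉ Q∨`, realized as a semidirect product. -/
abbrev Waf := Multiplicative R.Qv ⋊[R.phi] R.W

/-- the translation `t_ξ ∈ W_af` for `ξ ∈ Q∨` -/
def t (ξ : R.Qv) : R.Waf := SemidirectProduct.inl (Multiplicative.ofAdd ξ)

/-- the inclusion `W ⊆ W_af` -/
def j (w : R.W) : R.Waf := SemidirectProduct.inr w

/-- the `W`-component `w` in the normal form `x = w t_ξ` -/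
def wpart (x : R.Waf) : R.W := x.right

/-- the translation component `ξ` in the normal form `x = w t_ξ` -/
def ξpart (x : R.Waf) : R.Qv := R.σQv x.right⁻¹ (Multiplicative.toAdd x.left)

/-- The Iwahori–Matsumoto length function on the affine Weyl group:
`ℓ(w t_ξ) = ∑_{β ∈ Δ⁺} |⟨β, ξ⟩ + χ(w β ∈ Δ⁻)|`; it coincides with the Coxeter length of
`W_af` as a Coxeter group with simple reflections `s_0, s_1, …, s_n`, and restricts on `W`
to the length function of the finite Weyl group. -/
noncomputable def len (x : R.Waf) : ℕ :=
  ∑ β ∈ R.Δpos,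
    (R.pair β (R.ξpart x) + (if R.σP (R.wpart x) β ∈ R.Δpos then 0 else 1)).natAbs

/-- The semi-infinite length `ℓ∞(w t_ξ) = ℓ(w) + 2⟨ρ, ξ⟩`,
where `2⟨ρ, ξ⟩ = ∑_{β ∈ Δ⁺} ⟨β, ξ⟩`. -/
noncomputable def slen (x : R.Waf) : ℤ :=
  (R.len (R.j (R.wpart x)) : ℤ) + ∑ β ∈ R.Δpos, R.pair β (R.ξpart x)

/-- `2ρ∨`, the sum of the positive coroots. -/
def tworhov : R.Qv := ∑ β ∈ R.Δpos, R.coroot β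

/-- The set of affine simple reflections `{s_i : i ∈ I} ∪ {s_0}`,
where `s_0 = s_θ t_{−θ∨}`. -/
def Saf : Set R.Waf :=
  Set.range (fun i => R.j (R.s i)) ∪ {R.j R.sθ * R.t (-(R.coroot R.θ))}

end AffineRootSetup

/-!
Write `Inv(x)` for the set of positive affine roots that `x` makes negative. For an affine
simple reflection `σ` with simple root `a`, the Demazure step `z ↦ z ∗ σ` preserves inclusions
`Inv(z') ⊆ Inv(z)` (the lifting property): write a root `b` as `σ b + k a` and use that negative
affine roots are closed under such combinations. The translations `t_{-2kρ∨}` multiply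
length-additively, so `t_{-2kρ∨} ∗ t_{-2ρ∨} = t_{-2(k+1)ρ∨}`, and by induction
`Inv(t_{-2kρ∨}) ⊆ Inv(y_k)`, whence `ℓ(y_k) ≥ kL` with `L = ℓ(t_{-2ρ∨})`. Each pass along the
word adds at most `L`, so `ℓ(y_k) - kL` is a non-increasing sequence of natural numbers; once it
is constant every pass adds exactly `L`, which forces each Demazure step to be an honest product.

The root-system facts this needs (a simple reflection permutes the other positive roots,
`⟨β, 2ρ∨⟩ > 0` on positive roots, `⟨θ, θ∨⟩ = 2`) are not axioms of `AffineRootSetup`; they are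
derived from `ℓ(σ) = 1` for every affine simple reflection `σ ≠ 1`, which follows from `1 ∗ σ = σ`.
-/

theorem Nat.exists_forall_succ_eq_add {f : ℕ → ℕ} {L : ℕ} (hup : ∀ k, f (k + 1) ≤ f k + L)
    (hlow : ∀ k, k * L ≤ f k) : ∃ m, ∀ k, m ≤ k → f (k + 1) = f k + L := by
  have hsucc : ∀ k, (k + 1) * L = k * L + L := fun k => by ring
  have hanti : Antitone fun k => f k - k * L := antitone_nat_of_succ_le fun k => by
    have := hup k
    have := hlow (k + 1)
    rw [hsucc] at this ⊢
    omega
  obtain ⟨m, hm⟩ := WellFoundedLT.antitone_chain_condition hanti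
  refine ⟨m, fun k hk => ?_⟩
  have h1 := hm k hk
  have h2 := hm (k + 1) (by omega)
  have := hlow k
  have := hlow (k + 1)
  simp only [hsucc] at h1 h2 this
  omega

namespace AffineRootSetup

variable (R : AffineRootSetup)

section Components

@[simp] lemma wpart_mul (x y : R.Waf) : R.wpart (x * y) = R.wpart x * R.wpart y := rfl

@[simp] lemma wpart_t (η : R.Qv) : R.wpart (R.t η) = 1 := rfl

@[simp] lemma wpart_j (v : R.W) : R.wpart (R.j v) = v := rfl

lemma σQv_inv_apply_apply (w : R.W) (ξ : R.Qv) : R.σQv w⁻¹ (R.σQv w ξ) = ξ := by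
  rw [← AddAut.groupCompat_mul_apply, ← map_mul, inv_mul_cancel, map_one]
  rfl

lemma σQv_apply_inv_apply (w : R.W) (ξ : R.Qv) : R.σQv w (R.σQv w⁻¹ ξ) = ξ := by
  rw [← AddAut.groupCompat_mul_apply, ← map_mul, mul_inv_cancel, map_one]
  rfl

lemma pair_σP (w : R.W) (β : R.P) (ξ : R.Qv) :
    R.pair (R.σP w β) ξ = R.pair β (R.σQv w⁻¹ ξ) := by
  rw [← R.pair_invariant w β, σQv_apply_inv_apply]

lemma ξpart_mul (x y : R.Waf) :
    R.ξpart (x * y) = R.σQv (R.wpart y)⁻¹ (R.ξpart x) + R.ξpart y := by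
  change R.σQv (x.right * y.right)⁻¹
    (Multiplicative.toAdd x.left + R.σQv x.right (Multiplicative.toAdd y.left)) = _
  rw [map_add, mul_inv_rev, map_mul, AddAut.groupCompat_mul_apply,
    AddAut.groupCompat_mul_apply, R.σQv_inv_apply_apply]
  rfl

@[simp] lemma ξpart_one : R.ξpart (1 : R.Waf) = 0 := by
  simp [ξpart]

@[simp] lemma ξpart_t (η : R.Qv) : R.ξpart (R.t η) = η := by
  simp [ξpart, t]

@[simp] lemma ξpart_j (v : R.W) : R.ξpart (R.j v) = 0 := by
  simp [ξpart, j]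

lemma t_add (ξ η : R.Qv) : R.t (ξ + η) = R.t ξ * R.t η := by
  simp only [t, ofAdd_add, map_mul]

end Components

section Coefficients

noncomputable def coeff (x : R.Waf) (γ : R.P) : ℤ :=
  R.pair γ (R.ξpart x) + if R.σP (R.wpart x) γ ∈ R.Δpos then 0 else 1

lemma len_eq_sum_coeff (x : R.Waf) : R.len x = ∑ β ∈ R.Δpos, (R.coeff x β).natAbs := rfl

lemma zero_notMem_Δpos : (0 : R.P) ∉ R.Δpos :=
  fun h => R.neg_not_pos 0 h (by rwa [neg_zero])

lemma ne_zero_of_mem_Δpos {β : R.P} (h : β ∈ R.Δpos) : β ≠ 0 := by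
  rintro rfl
  exact R.zero_notMem_Δpos h

lemma notMem_Δpos_iff_neg_mem {w : R.W} {β : R.P} (hβ : β ∈ R.Δpos) :
    R.σP w β ∉ R.Δpos ↔ -(R.σP w β) ∈ R.Δpos :=
  ⟨(R.root_stable w β hβ).resolve_left, fun h h' => R.neg_not_pos _ h' h⟩

lemma coeff_neg (x : R.Waf) {β : R.P} (hβ : β ∈ R.Δpos) :
    R.coeff x (-β) = 1 - R.coeff x β := by
  by_cases h : R.σP (R.wpart x) β ∈ R.Δpos
  · have := R.neg_not_pos _ h
    simp [coeff, h, this]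
    ring
  · have := (R.notMem_Δpos_iff_neg_mem hβ).1 h
    simp [coeff, h, this]

lemma coeff_mul_t (x : R.Waf) (η : R.Qv) (β : R.P) :
    R.coeff (x * R.t η) β = R.coeff x β + R.pair β η := by
  simp only [coeff, ξpart_mul, wpart_t, wpart_mul, mul_one, inv_one, map_one,
    AddAut.groupCompat_one_apply, ξpart_t, map_add]
  ring

lemma coeff_mul_j (x : R.Waf) (v : R.W) (β : R.P) :
    R.coeff (x * R.j v) β = R.coeff x (R.σP v β) := by
  simp only [coeff, ξpart_mul, wpart_j, wpart_mul, ξpart_j, add_zero, ← R.pair_σP, map_mul,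
    AddAut.groupCompat_mul_apply]

lemma coeff_one (γ : R.P) : R.coeff 1 γ = if γ ∈ R.Δpos then 0 else 1 := by
  simp [coeff, wpart]

lemma coeff_t {β : R.P} (hβ : β ∈ R.Δpos) (η : R.Qv) : R.coeff (R.t η) β = R.pair β η := by
  simpa [R.coeff_one, hβ] using R.coeff_mul_t 1 η β

@[simp] lemma len_one : R.len 1 = 0 :=
  (R.len_eq_sum_coeff 1).trans (Finset.sum_eq_zero fun β hβ => by simp [R.coeff_one, hβ])

lemma natAbs_coeff_le_len (x : R.Waf) {β : R.P} (hβ : β ∈ R.Δpos) :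
    (R.coeff x β).natAbs ≤ R.len x :=
  Finset.single_le_sum (f := fun γ => (R.coeff x γ).natAbs) (fun _ _ => Nat.zero_le _) hβ

lemma two_le_len {x : R.Waf} {β γ : R.P} (hβ : β ∈ R.Δpos) (hγ : γ ∈ R.Δpos) (hne : β ≠ γ)
    (hβ0 : R.coeff x β ≠ 0) (hγ0 : R.coeff x γ ≠ 0) : 2 ≤ R.len x := by
  have hsub : {β, γ} ⊆ R.Δpos := Finset.insert_subset hβ (Finset.singleton_subset_iff.2 hγ)
  have := Finset.sum_le_sum_of_subset (f := fun δ => (R.coeff x δ).natAbs) hsub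
  rw [Finset.sum_pair hne] at this
  rw [len_eq_sum_coeff]
  omega

lemma len_add_natAbs_coeff {x y : R.Waf} {β₀ : R.P} (hβ₀ : β₀ ∈ R.Δpos)
    (h : ∑ β ∈ R.Δpos.erase β₀, (R.coeff y β).natAbs
      = ∑ β ∈ R.Δpos.erase β₀, (R.coeff x β).natAbs) :
    R.len y + (R.coeff x β₀).natAbs = R.len x + (R.coeff y β₀).natAbs := by
  rw [len_eq_sum_coeff, len_eq_sum_coeff, ← Finset.add_sum_erase _ _ hβ₀,
    ← Finset.add_sum_erase _ _ hβ₀, h]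
  ring

end Coefficients

section AffineRoots

/-- `(β, n)` stands for the affine function `β + nδ`. -/
abbrev V := R.P × ℤ

def act (x : R.Waf) : R.V →+ R.V where
  toFun v := (R.σP (R.wpart x) v.1, v.2 - R.pair v.1 (R.ξpart x))
  map_zero' := by simp
  map_add' u v := by
    ext
    · simp
    · simp only [Prod.snd_add, Prod.fst_add, map_add, AddMonoidHom.add_apply]
      ring

lemma act_apply (x : R.Waf) (v : R.V) :
    R.act x v = (R.σP (R.wpart x) v.1, v.2 - R.pair v.1 (R.ξpart x)) := rfl

lemma act_mul (x y : R.Waf) (v : R.V) : R.act (x * y) v = R.act x (R.act y v) := by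
  simp only [act_apply, wpart_mul, map_mul, AddAut.groupCompat_mul_apply, ξpart_mul, map_add,
    R.pair_σP, Prod.mk.injEq, true_and]
  ring

lemma act_one (v : R.V) : R.act 1 v = v := by
  simp [act_apply, wpart]

def IsPos (v : R.V) : Prop := 0 < v.2 ∨ (v.2 = 0 ∧ v.1 ∈ R.Δpos)

def IsNeg (v : R.V) : Prop := R.IsPos (-v)

def IsRoot (v : R.V) : Prop := v.1 ∈ R.Δpos ∨ -v.1 ∈ R.Δpos

lemma isRoot_act (x : R.Waf) {v : R.V} (hv : R.IsRoot v) : R.IsRoot (R.act x v) := by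
  rcases hv with h | h
  · simpa [IsRoot, act_apply] using R.root_stable (R.wpart x) _ h
  · simpa [IsRoot, act_apply, or_comm] using R.root_stable (R.wpart x) _ h

lemma isPos_act_iff (x : R.Waf) (v : R.V) : R.IsPos (R.act x v) ↔ R.coeff x v.1 ≤ v.2 := by
  simp only [IsPos, act_apply, coeff]
  split_ifs with h
  · simp only [h, and_true, add_zero]
    omega
  · simp only [h, and_false, or_false]
    omega

lemma coeff_neg_of_isRoot (x : R.Waf) {v : R.V} (hv : R.IsRoot v) :
    R.coeff x (-v.1) = 1 - R.coeff x v.1 := by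
  rcases hv with h | h
  · exact R.coeff_neg x h
  · rw [← neg_neg v.1, R.coeff_neg x h, neg_neg]
    ring

lemma isNeg_act_iff (x : R.Waf) {v : R.V} (hv : R.IsRoot v) :
    R.IsNeg (R.act x v) ↔ v.2 < R.coeff x v.1 := by
  rw [IsNeg, ← map_neg, isPos_act_iff, Prod.fst_neg, Prod.snd_neg, R.coeff_neg_of_isRoot x hv]
  omega

lemma isPos_or_isNeg_act (x : R.Waf) {v : R.V} (hv : R.IsRoot v) :
    R.IsPos (R.act x v) ∨ R.IsNeg (R.act x v) := by
  rw [R.isNeg_act_iff x hv, isPos_act_iff]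
  omega

lemma isNeg_neg_iff (v : R.V) : R.IsNeg (-v) ↔ R.IsPos v := by
  rw [IsNeg, neg_neg]

end AffineRoots

section SimpleReflections

lemma coeff_j (v : R.W) (β : R.P) :
    R.coeff (R.j v) β = if R.σP v β ∈ R.Δpos then 0 else 1 := by
  simp only [coeff, ξpart_j, map_zero, zero_add]
  rfl

lemma s_apply_α (i : R.I) : R.σP (R.s i) (R.α i) = -R.α i := by
  rw [R.s_act, R.pair_simple, two_zsmul]
  abel

lemma s_apply_s_apply (i : R.I) (β : R.P) : R.σP (R.s i) (R.σP (R.s i) β) = β := by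
  simp only [R.s_act, map_sub, map_zsmul, AddMonoidHom.sub_apply, AddMonoidHom.smul_apply,
    R.pair_simple, smul_eq_mul]
  module

variable {R}

lemma s_mem_Δpos {i : R.I} (hs : R.len (R.j (R.s i)) ≤ 1) {β : R.P} (hβ : β ∈ R.Δpos)
    (hne : β ≠ R.α i) : R.σP (R.s i) β ∈ R.Δpos := by
  by_contra h
  have hα : R.coeff (R.j (R.s i)) (R.α i) ≠ 0 := by
    simp [R.coeff_j, R.s_apply_α, R.neg_not_pos _ (R.simple_mem i)]
  have := R.two_le_len hβ (R.simple_mem i) hne (by simp [R.coeff_j, h]) hα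
  omega

lemma sum_erase_α_comp_s {i : R.I} (hs : R.len (R.j (R.s i)) ≤ 1)
    {M : Type*} [AddCommMonoid M] (f : R.P → M) :
    ∑ β ∈ R.Δpos.erase (R.α i), f (R.σP (R.s i) β) = ∑ β ∈ R.Δpos.erase (R.α i), f β := by
  have hmaps : ∀ β ∈ R.Δpos.erase (R.α i), R.σP (R.s i) β ∈ R.Δpos.erase (R.α i) := by
    intro β hβ
    rw [Finset.mem_erase] at hβ ⊢
    refine ⟨fun h => R.neg_not_pos _ (R.simple_mem i) ?_, s_mem_Δpos hs hβ.2 hβ.1⟩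
    rw [← R.s_apply_α, ← h, R.s_apply_s_apply]
    exact hβ.2
  exact Finset.sum_nbij' _ _ hmaps hmaps (fun β _ => R.s_apply_s_apply i β)
    (fun β _ => R.s_apply_s_apply i β) (fun _ _ => rfl)

variable (R)

def height : R.P →+ ℤ := R.pair.flip R.tworhov

lemma height_apply (β : R.P) : R.height β = R.pair β R.tworhov := rfl

variable {R}

lemma s_tworhov {i : R.I} (hs : R.len (R.j (R.s i)) ≤ 1) :
    R.σQv (R.s i) R.tworhov = R.tworhov - (2 : ℤ) • R.αv i := by
  have hα := R.simple_mem i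
  simp only [tworhov, map_sum, ← R.coroot_equivariant]
  rw [← Finset.add_sum_erase _ _ hα, ← Finset.add_sum_erase _ (fun β => R.coroot β) hα,
    sum_erase_α_comp_s hs R.coroot, R.s_apply_α, R.coroot_neg, R.coroot_simple]
  abel

lemma height_α {i : R.I} (hs : R.len (R.j (R.s i)) ≤ 1) : R.height (R.α i) = 2 := by
  have h := R.pair_invariant (R.s i) (R.α i) R.tworhov
  rw [R.s_apply_α, s_tworhov hs] at h
  simp only [map_neg, map_sub, map_zsmul, AddMonoidHom.neg_apply, R.pair_simple,
    smul_eq_mul] at h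
  rw [height_apply]
  omega

lemma one_le_height (hs : ∀ i, R.len (R.j (R.s i)) ≤ 1) {β : R.P} (hβ : β ∈ R.Δpos) :
    1 ≤ R.height β := by
  suffices ∀ γ ∈ AddSubmonoid.closure (Set.range R.α), 0 ≤ R.height γ ∧ (R.height γ = 0 → γ = 0)
    by
    obtain ⟨h0, h1⟩ := this β (R.pos_decomp β hβ)
    have := mt h1 (R.ne_zero_of_mem_Δpos hβ)
    omega
  intro γ hγ
  induction hγ using AddSubmonoid.closure_induction with
  | mem _ h =>
    obtain ⟨i, rfl⟩ := h
    simp [height_α (hs i)]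
  | zero => simp
  | add u v _ _ hu hv =>
    simp only [map_add]
    refine ⟨by omega, fun h => ?_⟩
    rw [hu.2 (by omega), hv.2 (by omega), add_zero]

end SimpleReflections

section NegativeRoots

variable {R} (hs : ∀ i, R.len (R.j (R.s i)) ≤ 1)
include hs

lemma height_neg_of_isNeg {v : R.V} (h : R.IsNeg v) :
    v.2 < 0 ∨ (v.2 = 0 ∧ R.height v.1 < 0) := by
  rcases h with h | ⟨h0, hmem⟩
  · exact Or.inl (by simpa using h)
  · have := one_le_height hs hmem
    simp only [Prod.snd_neg, neg_eq_zero, Prod.fst_neg, map_neg] at h0 this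
    omega

lemma isNeg_of_height_neg {v : R.V} (hv : R.IsRoot v)
    (h : v.2 < 0 ∨ (v.2 = 0 ∧ R.height v.1 < 0)) : R.IsNeg v := by
  rcases h with h | ⟨h0, hht⟩
  · exact Or.inl (by simpa using h)
  · refine Or.inr ⟨by simpa using h0, hv.resolve_left fun hmem => ?_⟩
    have := one_le_height hs hmem
    omega

/-- An affine root `β + nδ` is negative iff `(n, ⟨β, 2ρ∨⟩)` is lexicographically negative. -/
lemma isNeg_add_zsmul {u v : R.V} (hu : R.IsNeg u) (hv : R.IsNeg v) {k : ℤ} (hk : 0 ≤ k)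
    (hroot : R.IsRoot (u + k • v)) : R.IsNeg (u + k • v) := by
  apply isNeg_of_height_neg hs hroot
  have hu' := height_neg_of_isNeg hs hu
  have hv' := height_neg_of_isNeg hs hv
  simp only [Prod.snd_add, Prod.smul_snd, Prod.fst_add, Prod.smul_fst, map_add, map_zsmul,
    smul_eq_mul]
  rcases hk.lt_or_eq with hk | rfl
  · rcases hu' with hu' | hu' <;> rcases hv' with hv' | hv'
    · exact Or.inl (by nlinarith)
    · exact Or.inl (by nlinarith)
    · exact Or.inl (by nlinarith)
    · exact Or.inr ⟨by nlinarith, by nlinarith⟩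
  · simpa using hu'

end NegativeRoots

section ZerothReflection

noncomputable def s0 : R.Waf := R.j R.sθ * R.t (-R.coroot R.θ)

lemma s0_mem_Saf : R.s0 ∈ R.Saf := Or.inr rfl

lemma coeff_mul_s0 (x : R.Waf) (β : R.P) :
    R.coeff (x * R.s0) β = R.coeff x (R.σP R.sθ β) - R.pair β (R.coroot R.θ) := by
  rw [s0, ← mul_assoc, coeff_mul_t, coeff_mul_j, map_neg, sub_eq_add_neg]

lemma coeff_s0 (β : R.P) :
    R.coeff R.s0 β = (if R.σP R.sθ β ∈ R.Δpos then 0 else 1) - R.pair β (R.coroot R.θ) := by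
  rw [← one_mul R.s0, coeff_mul_s0, coeff_one]

lemma sθ_apply_of_pair_eq_zero {β : R.P} (h : R.pair β (R.coroot R.θ) = 0) : R.σP R.sθ β = β := by
  rw [R.sθ_act, h, zero_smul, sub_zero]

lemma sθ_apply_of_pair_eq_one {β : R.P} (h : R.pair β (R.coroot R.θ) = 1) :
    R.σP R.sθ β = β - R.θ := by
  rw [R.sθ_act, h, one_smul]

lemma pair_θ_ne_one : R.pair R.θ (R.coroot R.θ) ≠ 1 := fun h => by
  have := R.root_stable R.sθ R.θ R.θ_mem
  rw [sθ_apply_of_pair_eq_one _ h, sub_self, neg_zero] at this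
  exact this.elim R.zero_notMem_Δpos R.zero_notMem_Δpos

lemma coeff_s0_eq_zero_cases {β : R.P} (hβ : β ∈ R.Δpos) (h : R.coeff R.s0 β = 0) :
    R.pair β (R.coroot R.θ) = 0 ∨ (R.pair β (R.coroot R.θ) = 1 ∧ R.θ - β ∈ R.Δpos) := by
  rw [coeff_s0] at h
  split_ifs at h with hmem
  · exact Or.inl (by omega)
  · have h1 : R.pair β (R.coroot R.θ) = 1 := by omega
    rw [R.notMem_Δpos_iff_neg_mem hβ, sθ_apply_of_pair_eq_one _ h1, neg_sub] at hmem
    exact Or.inr ⟨h1, hmem⟩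

end ZerothReflection

section ZerothReflectionClassification

variable {R} (hl : R.len R.s0 = 1)
include hl

lemma eq_of_coeff_s0_ne_zero {β γ : R.P} (hβ : β ∈ R.Δpos) (hβ0 : R.coeff R.s0 β ≠ 0)
    (hγ : γ ∈ R.Δpos) (hγ0 : R.coeff R.s0 γ ≠ 0) : γ = β := by
  by_contra hne
  have := R.two_le_len hγ hβ hne hγ0 hβ0
  omega

lemma eq_of_pair_coroot_θ_ne {β γ : R.P} (hβ : β ∈ R.Δpos) (hβ0 : R.coeff R.s0 β ≠ 0)
    (hγ : γ ∈ R.Δpos) (h0 : R.pair γ (R.coroot R.θ) ≠ 0) (h1 : R.pair γ (R.coroot R.θ) ≠ 1) :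
    γ = β :=
  eq_of_coeff_s0_ne_zero hl hβ hβ0 hγ fun hz =>
    (R.coeff_s0_eq_zero_cases hγ hz).elim h0 fun h => h1 h.1

/-- If `β₀ ≠ θ`, then `⟨θ, θ∨⟩ = 0`, and each way for `β₀` to have a nonzero coefficient
produces a second positive root pairing with `θ∨` outside `{0, 1}`. -/
lemma eq_θ_of_coeff_s0_ne_zero {β₀ : R.P} (hβ₀ : β₀ ∈ R.Δpos) (h0 : R.coeff R.s0 β₀ ≠ 0) :
    β₀ = R.θ := by
  have huniq := fun {γ} => eq_of_coeff_s0_ne_zero hl (γ := γ) hβ₀ h0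
  have hbad := fun {γ} => eq_of_pair_coroot_θ_ne hl (γ := γ) hβ₀ h0
  by_contra hθ
  have hT : R.pair R.θ (R.coroot R.θ) = 0 := by
    by_contra hT
    exact hθ (hbad R.θ_mem hT R.pair_θ_ne_one).symm
  have hθ0 := R.ne_zero_of_mem_Δpos R.θ_mem
  have hc := R.natAbs_coeff_le_len R.s0 hβ₀
  have hsθ := R.sθ_act β₀
  rw [coeff_s0] at h0 hc
  split_ifs at h0 hc with hmem
  · rcases (by omega : R.pair β₀ (R.coroot R.θ) = 1 ∨ R.pair β₀ (R.coroot R.θ) = -1)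
      with h1 | h1
    · rw [hsθ, h1, one_smul] at hmem
      have hε0 : R.coeff R.s0 (β₀ - R.θ) = 0 := by
        by_contra hε0
        exact hθ0 (by simpa using huniq hmem hε0)
      obtain h | ⟨-, hδ⟩ := R.coeff_s0_eq_zero_cases hmem hε0
      · simp [h1, hT] at h
      · have := congrArg (R.pair · (R.coroot R.θ)) (hbad hδ (by simp [h1, hT])
          (by simp [h1, hT]))
        simp [h1, hT] at this
    · rw [hsθ, h1, neg_one_smul, sub_neg_eq_add] at hmem
      exact hθ0 (by simpa using hbad hmem (by simp [h1, hT]) (by simp [h1, hT]))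
  · rcases (by omega : R.pair β₀ (R.coroot R.θ) = 0 ∨ R.pair β₀ (R.coroot R.θ) = 2)
      with h2 | h2
    · exact hmem (by rwa [sθ_apply_of_pair_eq_zero _ h2])
    · rw [R.notMem_Δpos_iff_neg_mem hβ₀, hsθ, h2, neg_sub] at hmem
      have := congrArg (R.pair · (R.coroot R.θ)) (hbad hmem (by simp [h2, hT])
        (by simp [h2, hT]))
      simp [h2, hT] at this

lemma pair_θ_eq_two : R.pair R.θ (R.coroot R.θ) = 2 := by
  obtain ⟨β₀, hβ₀, h0⟩ : ∃ β ∈ R.Δpos, R.coeff R.s0 β ≠ 0 := by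
    by_contra! h
    have : R.len R.s0 = 0 :=
      (R.len_eq_sum_coeff _).trans (Finset.sum_eq_zero fun β hβ => by rw [h β hβ]; rfl)
    omega
  obtain rfl := eq_θ_of_coeff_s0_ne_zero hl hβ₀ h0
  have hc := R.natAbs_coeff_le_len R.s0 R.θ_mem
  have hsθ := R.sθ_act R.θ
  rw [coeff_s0] at h0 hc
  split_ifs at h0 hc with hmem
  · have hT : R.pair R.θ (R.coroot R.θ) = -1 := by
      have := R.pair_θ_ne_one
      omega
    rw [hsθ, hT, neg_one_smul, sub_neg_eq_add] at hmem
    have h2 : R.coeff R.s0 (R.θ + R.θ) ≠ 0 := fun h => by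
      rcases R.coeff_s0_eq_zero_cases hmem h with h | ⟨h, -⟩ <;> simp [hT] at h
    exact absurd (by simpa using eq_θ_of_coeff_s0_ne_zero hl hmem h2)
      (R.ne_zero_of_mem_Δpos R.θ_mem)
  · rcases (by omega : R.pair R.θ (R.coroot R.θ) = 0 ∨ R.pair R.θ (R.coroot R.θ) = 2)
      with hT | hT
    · exact absurd (by rwa [sθ_apply_of_pair_eq_zero _ hT]) hmem
    · exact hT

lemma sθ_apply_θ : R.σP R.sθ R.θ = -R.θ := by
  rw [R.sθ_act, pair_θ_eq_two hl]
  module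

lemma coeff_s0_θ : R.coeff R.s0 R.θ = -1 := by
  rw [coeff_s0, sθ_apply_θ hl, if_neg (R.neg_not_pos _ R.θ_mem), pair_θ_eq_two hl]
  norm_num

lemma coeff_s0_eq_zero {β : R.P} (hβ : β ∈ R.Δpos) (hne : β ≠ R.θ) : R.coeff R.s0 β = 0 := by
  by_contra h
  exact hne (eq_θ_of_coeff_s0_ne_zero hl hβ h)

lemma sum_erase_θ_natAbs_coeff_mul_s0 (x : R.Waf) :
    ∑ β ∈ R.Δpos.erase R.θ, (R.coeff (x * R.s0) β).natAbs
      = ∑ β ∈ R.Δpos.erase R.θ, (R.coeff x β).natAbs := by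
  have hcases : ∀ β ∈ R.Δpos.erase R.θ, R.pair β (R.coroot R.θ) = 0 ∨
      (R.pair β (R.coroot R.θ) = 1 ∧ R.θ - β ∈ R.Δpos) := fun β hβ =>
    R.coeff_s0_eq_zero_cases (Finset.mem_of_mem_erase hβ)
      (coeff_s0_eq_zero hl (Finset.mem_of_mem_erase hβ) (Finset.ne_of_mem_erase hβ))
  let φ : R.P → R.P := fun β => if R.pair β (R.coroot R.θ) = 0 then β else R.θ - β
  have hmaps : ∀ β ∈ R.Δpos.erase R.θ, φ β ∈ R.Δpos.erase R.θ := fun β hβ => by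
    rcases hcases β hβ with h | ⟨h, hmem⟩
    · simpa [φ, h] using hβ
    · simp only [φ, h, one_ne_zero, if_false, Finset.mem_erase, ne_eq, sub_eq_self]
      exact ⟨R.ne_zero_of_mem_Δpos (Finset.mem_of_mem_erase hβ), hmem⟩
  have hinv : ∀ β ∈ R.Δpos.erase R.θ, φ (φ β) = β := fun β hβ => by
    rcases hcases β hβ with h | ⟨h, -⟩
    · simp [φ, h]
    · simp [φ, h, pair_θ_eq_two hl]
  refine Finset.sum_nbij' φ φ hmaps hmaps hinv hinv fun β hβ => ?_
  rw [coeff_mul_s0]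
  rcases hcases β hβ with h | ⟨h, hmem⟩
  · simp [φ, h, sθ_apply_of_pair_eq_zero _ h]
  · rw [sθ_apply_of_pair_eq_one _ h, h, ← neg_sub R.θ β, R.coeff_neg x hmem]
    simp [φ, h]

end ZerothReflectionClassification

section SimpleAffineRoots

/-- `σ` is the reflection in the simple affine root `a = β + nδ`. The field `len_mul` says
`ℓ(xσ) - ℓ(x) = |c - n - 1| - |c - n|` with `c = coeff x β`, which is `±1` according to the sign
of `x a` by `isPos_act_iff`. -/
structure IsSimpleRoot (σ : R.Waf) (a : R.V) : Prop where
  isRoot : R.IsRoot a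
  isPos : R.IsPos a
  act_self : R.act σ a = -a
  exists_act_eq_sub : ∀ v, ∃ k : ℤ, R.act σ v = v - k • a
  isPos_act : ∀ v, R.IsRoot v → R.IsPos v → v ≠ a → R.IsPos (R.act σ v)
  len_mul : ∀ x, R.len (x * σ) + (R.coeff x a.1 - a.2).natAbs
    = R.len x + (R.coeff x a.1 - a.2 - 1).natAbs

variable {R}

lemma IsSimpleRoot.len_mul_of_isPos {σ : R.Waf} {a : R.V} (h : R.IsSimpleRoot σ a)
    {x : R.Waf} (hx : R.IsPos (R.act x a)) : R.len (x * σ) = R.len x + 1 := by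
  have := h.len_mul x
  rw [isPos_act_iff] at hx
  omega

lemma IsSimpleRoot.len_mul_of_isNeg {σ : R.Waf} {a : R.V} (h : R.IsSimpleRoot σ a)
    {x : R.Waf} (hx : R.IsNeg (R.act x a)) : R.len x = R.len (x * σ) + 1 := by
  have := h.len_mul x
  rw [R.isNeg_act_iff x h.isRoot] at hx
  omega

variable (R)

lemma act_j (w : R.W) (v : R.V) : R.act (R.j w) v = (R.σP w v.1, v.2) := by
  simp [act_apply]

lemma act_s0 (v : R.V) :
    R.act R.s0 v = (R.σP R.sθ v.1, v.2 + R.pair v.1 (R.coroot R.θ)) := by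
  simp [act_apply, s0, ξpart_mul]

variable {R}

lemma isSimpleRoot_s {i : R.I} (hs : R.len (R.j (R.s i)) ≤ 1) :
    R.IsSimpleRoot (R.j (R.s i)) (R.α i, 0) where
  isRoot := Or.inl (R.simple_mem i)
  isPos := Or.inr ⟨rfl, R.simple_mem i⟩
  act_self := by simp [act_j, R.s_apply_α]
  exists_act_eq_sub v := ⟨R.pair v.1 (R.αv i), by ext <;> simp [act_j, R.s_act]⟩
  isPos_act v _ hv hne := by
    rw [act_j]
    rcases hv with h | ⟨h0, hmem⟩
    · exact Or.inl h
    · exact Or.inr ⟨h0, s_mem_Δpos hs hmem fun h => hne (Prod.ext h h0)⟩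
  len_mul x := by
    have := R.len_add_natAbs_coeff (R.simple_mem i) (y := x * R.j (R.s i))
      (by simpa only [coeff_mul_j] using sum_erase_α_comp_s hs (R.coeff x · |>.natAbs))
    rw [coeff_mul_j, R.s_apply_α, R.coeff_neg x (R.simple_mem i)] at this
    simp only [sub_zero]
    omega

lemma isSimpleRoot_s0 (hl : R.len R.s0 = 1) : R.IsSimpleRoot R.s0 (-R.θ, 1) where
  isRoot := Or.inr (by simpa using R.θ_mem)
  isPos := Or.inl one_pos
  act_self := by simp [act_s0, sθ_apply_θ hl, pair_θ_eq_two hl]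
  exists_act_eq_sub v := ⟨-R.pair v.1 (R.coroot R.θ), by ext <;> simp [act_s0, R.sθ_act]⟩
  isPos_act v hroot hv hne := by
    rw [isPos_act_iff]
    rcases hroot with h | h
    · have : R.coeff R.s0 v.1 ≤ 0 := by
        by_cases hθ : v.1 = R.θ
        · rw [hθ, coeff_s0_θ hl]
          norm_num
        · rw [coeff_s0_eq_zero hl h hθ]
      have : 0 ≤ v.2 := by rcases hv with h' | ⟨h', -⟩ <;> omega
      omega
    · have h1 : 0 < v.2 := hv.elim id fun ⟨_, h'⟩ => absurd h' (by simpa using R.neg_not_pos _ h)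
      rw [← neg_neg v.1, R.coeff_neg _ h]
      by_cases hθ : -v.1 = R.θ
      · have : v.2 ≠ 1 := fun h1 => hne (Prod.ext (by rw [← hθ, neg_neg]) h1)
        rw [hθ, coeff_s0_θ hl]
        omega
      · rw [coeff_s0_eq_zero hl h hθ]
        omega
  len_mul x := by
    have := R.len_add_natAbs_coeff R.θ_mem (y := x * R.s0)
      (sum_erase_θ_natAbs_coeff_mul_s0 hl x)
    rw [coeff_mul_s0, sθ_apply_θ hl, pair_θ_eq_two hl, R.coeff_neg x R.θ_mem] at this
    rw [R.coeff_neg x R.θ_mem]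
    omega

end SimpleAffineRoots

section AffineSimpleReflections

variable {R} (hSaf : ∀ σ ∈ R.Saf, σ = 1 ∨ R.len σ = 1)
include hSaf

lemma len_s_le_one (i : R.I) : R.len (R.j (R.s i)) ≤ 1 := by
  rcases hSaf _ (Or.inl ⟨i, rfl⟩) with h | h <;> simp [h]

lemma eq_one_or_exists_isSimpleRoot {σ : R.Waf} (hσ : σ ∈ R.Saf) :
    σ = 1 ∨ ∃ a, R.IsSimpleRoot σ a := by
  rcases hσ with ⟨i, rfl⟩ | rfl
  · exact Or.inr ⟨_, isSimpleRoot_s (len_s_le_one hSaf i)⟩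
  · exact (hSaf _ R.s0_mem_Saf).imp id fun h => ⟨_, isSimpleRoot_s0 h⟩

lemma len_mul_le {σ : R.Waf} (hσ : σ ∈ R.Saf) (x : R.Waf) : R.len (x * σ) ≤ R.len x + 1 := by
  rcases eq_one_or_exists_isSimpleRoot hSaf hσ with rfl | ⟨a, ha⟩
  · simp
  · rcases R.isPos_or_isNeg_act x ha.isRoot with hx | hx
    · exact (ha.len_mul_of_isPos hx).le
    · have := ha.len_mul_of_isNeg hx
      omega

lemma len_mul_prod_le (l : List R.Waf) (hl : ∀ σ ∈ l, σ ∈ R.Saf) (z : R.Waf) :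
    R.len (z * l.prod) ≤ R.len z + l.length := by
  induction l generalizing z with
  | nil => simp
  | cons σ l ih =>
    rw [List.forall_mem_cons] at hl
    have := len_mul_le hSaf hl.1 z
    have := ih hl.2 (z * σ)
    rw [List.prod_cons, ← mul_assoc, List.length_cons]
    omega

end AffineSimpleReflections

section Inversions

def inversions (x : R.Waf) : Set R.V := {a | R.IsRoot a ∧ R.IsPos a ∧ R.IsNeg (R.act x a)}

variable {R}

lemma inversions_one (x : R.Waf) : R.inversions 1 ⊆ R.inversions x := by
  rintro a ⟨hroot, hpos, hneg⟩
  have h1 := (R.isNeg_act_iff 1 hroot).1 hneg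
  have h2 := (R.isPos_act_iff 1 a).1 (by rwa [act_one])
  omega

lemma act_mem_inversions {σ : R.Waf} {a : R.V} (ha : R.IsSimpleRoot σ a) {z : R.Waf} {b : R.V}
    (hb : b ∈ R.inversions (z * σ)) (hne : b ≠ a) : R.act σ b ∈ R.inversions z := by
  obtain ⟨hroot, hpos, hneg⟩ := hb
  exact ⟨R.isRoot_act σ hroot, ha.isPos_act b hroot hpos hne, by rwa [← act_mul]⟩

lemma inversions_mul_subset_mul {σ : R.Waf} {a : R.V} (ha : R.IsSimpleRoot σ a) {z' z : R.Waf}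
    (hz : R.inversions z' ⊆ R.inversions z) (hza : R.IsPos (R.act z a)) :
    R.inversions (z' * σ) ⊆ R.inversions (z * σ) := by
  intro b hb
  by_cases hne : b = a
  · subst hne
    exact ⟨hb.1, hb.2.1, by rwa [act_mul, ha.act_self, map_neg, isNeg_neg_iff]⟩
  · obtain ⟨-, -, hneg⟩ := hz (act_mem_inversions ha hb hne)
    exact ⟨hb.1, hb.2.1, by rwa [act_mul]⟩

/-- The lifting property of the Demazure product, in terms of inversion sets. -/
lemma inversions_mul_subset {σ : R.Waf} {a : R.V} (ha : R.IsSimpleRoot σ a)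
    (hs : ∀ i, R.len (R.j (R.s i)) ≤ 1) {z' z : R.Waf} (hz : R.inversions z' ⊆ R.inversions z)
    (hz'a : R.IsPos (R.act z' a)) (hza : R.IsNeg (R.act z a)) :
    R.inversions (z' * σ) ⊆ R.inversions z := by
  intro b hb
  by_cases hne : b = a
  · subst hne
    exact ⟨hb.1, hb.2.1, hza⟩
  have hσb := act_mem_inversions ha hb hne
  obtain ⟨k, hk⟩ := ha.exists_act_eq_sub b
  have hb_eq : b = R.act σ b + k • a := by rw [hk]; abel
  rcases le_or_gt 0 k with hk0 | hk0
  · refine ⟨hb.1, hb.2.1, ?_⟩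
    rw [hb_eq, map_add, map_zsmul]
    refine isNeg_add_zsmul hs (hz hσb).2.2 hza hk0 ?_
    rw [← map_zsmul, ← map_add, ← hb_eq]
    exact R.isRoot_act z hb.1
  · refine hz ⟨hb.1, hb.2.1, ?_⟩
    have hb_eq' : R.act z' b = R.act z' (R.act σ b) + (-k) • -R.act z' a := by
      conv_lhs => rw [hb_eq]
      rw [map_add, map_zsmul, neg_smul_neg]
    rw [hb_eq']
    refine isNeg_add_zsmul hs hσb.2.2 (by rwa [isNeg_neg_iff]) (by omega) ?_
    rw [← hb_eq']
    exact R.isRoot_act z' hb.1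

end Inversions

section Demazure

def IsDemazureOnSaf (dstar : R.Waf → R.Waf → R.Waf) : Prop :=
  ∀ y, ∀ σ ∈ R.Saf, dstar y σ = if R.len (y * σ) = R.len y + 1 then y * σ else y

variable {R} {dstar : R.Waf → R.Waf → R.Waf} (hd : R.IsDemazureOnSaf dstar)
include hd

lemma eq_one_or_len_eq_one_of_mem_Saf (h1 : ∀ σ, dstar 1 σ = σ) :
    ∀ σ ∈ R.Saf, σ = 1 ∨ R.len σ = 1 := fun σ hσ => by
  have := hd 1 σ hσ
  rw [h1, one_mul, len_one, zero_add] at this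
  split_ifs at this with h
  · exact Or.inr h
  · exact Or.inl this

lemma len_dstar_le {σ : R.Waf} (hσ : σ ∈ R.Saf) (y : R.Waf) :
    R.len (dstar y σ) ≤ R.len y + 1 := by
  rw [hd y σ hσ]
  split_ifs with h <;> omega

lemma dstar_eq_mul_of_isPos {σ : R.Waf} (hσ : σ ∈ R.Saf) {a : R.V} (ha : R.IsSimpleRoot σ a)
    {y : R.Waf} (hy : R.IsPos (R.act y a)) : dstar y σ = y * σ := by
  rw [hd y σ hσ, if_pos (ha.len_mul_of_isPos hy)]

lemma dstar_eq_of_isNeg {σ : R.Waf} (hσ : σ ∈ R.Saf) {a : R.V} (ha : R.IsSimpleRoot σ a)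
    {y : R.Waf} (hy : R.IsNeg (R.act y a)) : dstar y σ = y := by
  have := ha.len_mul_of_isNeg hy
  rw [hd y σ hσ, if_neg (by omega)]

lemma inversions_dstar_subset (hSaf : ∀ σ ∈ R.Saf, σ = 1 ∨ R.len σ = 1) {σ : R.Waf}
    (hσ : σ ∈ R.Saf) {z' z : R.Waf} (hz : R.inversions z' ⊆ R.inversions z) :
    R.inversions (dstar z' σ) ⊆ R.inversions (dstar z σ) := by
  rcases eq_one_or_exists_isSimpleRoot hSaf hσ with rfl | ⟨a, ha⟩
  · simpa [hd _ 1 hσ] using hz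
  rcases R.isPos_or_isNeg_act z' ha.isRoot with hz'a | hz'a
  · rw [dstar_eq_mul_of_isPos hd hσ ha hz'a]
    rcases R.isPos_or_isNeg_act z ha.isRoot with hza | hza
    · rw [dstar_eq_mul_of_isPos hd hσ ha hza]
      exact inversions_mul_subset_mul ha hz hza
    · rw [dstar_eq_of_isNeg hd hσ ha hza]
      exact inversions_mul_subset ha (len_s_le_one hSaf) hz hz'a hza
  · have hza := (hz ⟨ha.isRoot, ha.isPos, hz'a⟩).2.2
    rwa [dstar_eq_of_isNeg hd hσ ha hz'a, dstar_eq_of_isNeg hd hσ ha hza]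

lemma len_foldl_le (l : List R.Waf) (hl : ∀ σ ∈ l, σ ∈ R.Saf) (z : R.Waf) :
    R.len (l.foldl dstar z) ≤ R.len z + l.length := by
  induction l generalizing z with
  | nil => simp
  | cons σ l ih =>
    rw [List.forall_mem_cons] at hl
    have := len_dstar_le hd hl.1 z
    have := ih hl.2 (dstar z σ)
    rw [List.foldl_cons, List.length_cons]
    omega

lemma foldl_eq_mul_prod_of_len_foldl (l : List R.Waf) (hl : ∀ σ ∈ l, σ ∈ R.Saf) (z : R.Waf)
    (h : R.len (l.foldl dstar z) = R.len z + l.length) : l.foldl dstar z = z * l.prod := by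
  induction l generalizing z with
  | nil => simp
  | cons σ l ih =>
    rw [List.forall_mem_cons] at hl
    rw [List.foldl_cons, List.length_cons] at h
    have := len_foldl_le hd l hl.2 (dstar z σ)
    have hstep : R.len (dstar z σ) = R.len z + 1 := by
      have := len_dstar_le hd hl.1 z
      omega
    have hmul : dstar z σ = z * σ := by
      rw [hd z σ hl.1] at hstep ⊢
      split_ifs at hstep ⊢ with hσ
      · rfl
      · omega
    rw [List.foldl_cons, List.prod_cons, ← mul_assoc, ← hmul]
    exact ih hl.2 _ (by omega)

lemma foldl_eq_mul_prod_of_len_mul (hSaf : ∀ σ ∈ R.Saf, σ = 1 ∨ R.len σ = 1)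
    (l : List R.Waf) (hl : ∀ σ ∈ l, σ ∈ R.Saf) (z : R.Waf)
    (h : R.len (z * l.prod) = R.len z + l.length) : l.foldl dstar z = z * l.prod := by
  induction l generalizing z with
  | nil => simp
  | cons σ l ih =>
    rw [List.forall_mem_cons] at hl
    rw [List.prod_cons, ← mul_assoc, List.length_cons] at h
    rw [List.prod_cons, ← mul_assoc]
    have := len_mul_prod_le hSaf l hl.2 (z * σ)
    have := len_mul_le hSaf hl.1 z
    have hmul : dstar z σ = z * σ := by
      rw [hd z σ hl.1, if_pos (by omega)]
    rw [List.foldl_cons, hmul]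
    exact ih hl.2 _ (by omega)

lemma inversions_foldl_subset (hSaf : ∀ σ ∈ R.Saf, σ = 1 ∨ R.len σ = 1)
    (l : List R.Waf) (hl : ∀ σ ∈ l, σ ∈ R.Saf) {z' z : R.Waf}
    (hz : R.inversions z' ⊆ R.inversions z) :
    R.inversions (l.foldl dstar z') ⊆ R.inversions (l.foldl dstar z) := by
  induction l generalizing z' z with
  | nil => exact hz
  | cons σ l ih =>
    rw [List.forall_mem_cons] at hl
    exact ih hl.2 (inversions_dstar_subset hd hSaf hl.1 hz)

end Demazure

section Translations

noncomputable def tau (n : ℕ) : R.Waf := R.t (-((n : ℤ) • R.tworhov))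

lemma tau_zero : R.tau 0 = 1 := by
  simp [tau, t]

lemma tau_one : R.tau 1 = R.t (-R.tworhov) := by
  simp [tau]

lemma tau_add (m n : ℕ) : R.tau (m + n) = R.tau m * R.tau n := by
  rw [tau, tau, tau, ← t_add]
  congr 1
  push_cast
  module

lemma coeff_tau {β : R.P} (hβ : β ∈ R.Δpos) (n : ℕ) :
    R.coeff (R.tau n) β = -(n * R.height β) := by
  simp [tau, coeff_t _ hβ, height_apply]

lemma len_tau (n : ℕ) : R.len (R.tau n) = n * R.len (R.tau 1) := by
  rw [len_eq_sum_coeff, len_eq_sum_coeff, Finset.mul_sum]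
  refine Finset.sum_congr rfl fun β hβ => ?_
  simp [coeff_tau _ hβ, Int.natAbs_mul]

variable {R}

lemma len_tau_le (hs : ∀ i, R.len (R.j (R.s i)) ≤ 1) {n : ℕ} {x : R.Waf}
    (h : R.inversions (R.tau n) ⊆ R.inversions x) : R.len (R.tau n) ≤ R.len x := by
  rw [len_eq_sum_coeff, len_eq_sum_coeff]
  refine Finset.sum_le_sum fun β hβ => ?_
  rw [coeff_tau _ hβ]
  set m := (n : ℤ) * R.height β with hm
  have hm0 : 0 ≤ m := mul_nonneg n.cast_nonneg (by linarith [one_le_height hs hβ])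
  rcases hm0.lt_or_eq with hm0 | hm0
  · have hroot : R.IsRoot (-β, m) := Or.inr (by simpa using hβ)
    have hmem : ((-β, m) : R.V) ∈ R.inversions (R.tau n) := by
      refine ⟨hroot, Or.inl hm0, ?_⟩
      rw [R.isNeg_act_iff _ hroot, R.coeff_neg _ hβ, coeff_tau _ hβ]
      omega
    have := (R.isNeg_act_iff x hroot).1 (h hmem).2.2
    rw [R.coeff_neg _ hβ] at this
    omega
  · simp [← hm0]

end Translations

section DemazureSequence

variable {R} {dstar : R.Waf → R.Waf → R.Waf} (hd : R.IsDemazureOnSaf dstar)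
  (hSaf : ∀ σ ∈ R.Saf, σ = 1 ∨ R.len σ = 1) {word : List R.Waf}
  (hword : ∀ σ ∈ word, σ ∈ R.Saf) (hprod : word.prod = R.t (-R.tworhov))
  (hreduced : word.length = R.len (R.t (-R.tworhov)))
include hd hSaf hword hprod hreduced

lemma foldl_tau (k : ℕ) : word.foldl dstar (R.tau k) = R.tau (k + 1) := by
  rw [← tau_one] at hprod hreduced
  rw [foldl_eq_mul_prod_of_len_mul hd hSaf word hword, hprod, tau_add]
  rw [hprod, ← tau_add, len_tau, R.len_tau k, hreduced]
  ring

variable {y : ℕ → R.Waf} (hy : ∀ k, y (k + 1) = word.foldl dstar (y k))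
include hy

lemma inversions_tau_subset (k : ℕ) : R.inversions (R.tau k) ⊆ R.inversions (y k) := by
  induction k with
  | zero => exact tau_zero R ▸ inversions_one (y 0)
  | succ k ih =>
    rw [hy, ← foldl_tau hd hSaf hword hprod hreduced]
    exact inversions_foldl_subset hd hSaf word hword ih

lemma exists_forall_len_succ_eq :
    ∃ m, ∀ k, m ≤ k → R.len (y (k + 1)) = R.len (y k) + word.length := by
  refine Nat.exists_forall_succ_eq_add (f := fun k => R.len (y k)) (fun k => ?_) fun k => ?_
  · rw [hy]
    exact len_foldl_le hd word hword (y k)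
  · rw [hreduced, ← tau_one, ← len_tau]
    exact len_tau_le (len_s_le_one hSaf) (inversions_tau_subset hd hSaf hword hprod hreduced hy k)

end DemazureSequence

end AffineRootSetup

theorem statement8_general (R : AffineRootSetup)
    (dstar : R.Waf → R.Waf → R.Waf)
    (hone : ∀ a : R.Waf, dstar a 1 = a ∧ dstar 1 a = a)
    (hsimple : ∀ (y : R.Waf), ∀ σ ∈ R.Saf,
      dstar y σ = if R.len (y * σ) = R.len y + 1 then y * σ else y)
    (word : List R.Waf)
    (hword : ∀ σ ∈ word, σ ∈ R.Saf)
    (hprod : word.prod = R.t (-R.tworhov))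
    (hreduced : word.length = R.len (R.t (-R.tworhov)))
    (y : ℕ → R.Waf)
    (hy : ∀ k : ℕ, y (k + 1) = word.foldl dstar (y k)) :
    ∃ m₁ : ℕ, ∀ k : ℕ, m₁ ≤ k →
      y (k + 1) = y k * R.t (-R.tworhov) ∧
      ∀ n : ℕ, 0 < n →
        R.len (y k * R.t (-((n : ℤ) • R.tworhov)))
          = R.len (y k) + R.len (R.t (-((n : ℤ) • R.tworhov))) := by
  have hSaf := AffineRootSetup.eq_one_or_len_eq_one_of_mem_Saf hsimple fun σ => (hone σ).2
  obtain ⟨m, hm⟩ :=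
    AffineRootSetup.exists_forall_len_succ_eq hsimple hSaf hword hprod hreduced hy
  have hstep : ∀ k, m ≤ k → y (k + 1) = y k * R.tau 1 := fun k hk => by
    rw [hy, AffineRootSetup.foldl_eq_mul_prod_of_len_foldl hsimple word hword _ (hy k ▸ hm k hk),
      hprod, R.tau_one]
  have hshift : ∀ k, m ≤ k → ∀ n, y (k + n) = y k * R.tau n ∧
      R.len (y (k + n)) = R.len (y k) + n * word.length := fun k hk n => by
    induction n with
    | zero => simp [R.tau_zero]
    | succ n ih =>
      rw [← add_assoc, hm _ (by omega), hstep _ (by omega), ih.2, ih.1, mul_assoc, ← R.tau_add]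
      exact ⟨rfl, by ring⟩
  refine ⟨m, fun k hk => ⟨by rw [hstep k hk, R.tau_one], fun n _ => ?_⟩⟩
  change R.len (y k * R.tau n) = R.len (y k) + R.len (R.tau n)
  rw [← (hshift k hk n).1, (hshift k hk n).2, R.len_tau, R.tau_one, hreduced]

/-- let `(y_k)` be a sequence in `W_af` with `y_{k+1} = y_k ∗ t_{−2ρ∨}`,
where `∗` is the Demazure product computed along a fixed reduced word for `t_{−2ρ∨}` in the
affine simple reflections. Then there is `m₁ ≥ 0` such that for all `k ≥ m₁` one has
`y_{k+1} = y_k · t_{−2ρ∨}` (ordinary product) and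
`ℓ(y_k t_{−2nρ∨}) = ℓ(y_k) + ℓ(t_{−2nρ∨})` for all `n > 0`. -/
theorem statement8 (R : AffineRootSetup)
    (dstar : R.Waf → R.Waf → R.Waf)
    (hassoc : ∀ a b c : R.Waf, dstar (dstar a b) c = dstar a (dstar b c))
    (hone : ∀ a : R.Waf, dstar a 1 = a ∧ dstar 1 a = a)
    (hsimple : ∀ (y : R.Waf), ∀ σ ∈ R.Saf,
      dstar y σ = if R.len (y * σ) = R.len y + 1 then y * σ else y)
    (hgen : Subgroup.closure R.Saf = ⊤)
    (word : List R.Waf)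
    (hword : ∀ σ ∈ word, σ ∈ R.Saf)
    (hprod : word.prod = R.t (-R.tworhov))
    (hreduced : word.length = R.len (R.t (-R.tworhov)))
    (y : ℕ → R.Waf)
    (hy : ∀ k : ℕ, y (k + 1) = word.foldl dstar (y k)) :
    ∃ m₁ : ℕ, ∀ k : ℕ, m₁ ≤ k →
      y (k + 1) = y k * R.t (-R.tworhov) ∧
      ∀ n : ℕ, 0 < n →
        R.len (y k * R.t (-((n : ℤ) • R.tworhov)))
          = R.len (y k) + R.len (R.t (-((n : ℤ) • R.tworhov))) :=
  statement8_general R dstar hone hsimple word hword hprod hreduced y hy
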